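/- Let S and R be finite sets, N a real S×R matrix, W = range(N), W^⊥ = ker(Nᵀ), and fix i ∈ S. Let u* be an elementary vector of W^⊥ with u*_i ≠ 0. Then there exist a set S' ⊆ S, for each s ∈ S' an elementary vector w^s ∈ W, and for each s ∈ S∖S' an elementary vector u^s ∈ W^⊥, such that: (a) i ∉ S' and supp(u*) ⊆ S' ∪ {i}; (b) for each s ∈ S', supp(w^s) ⊆ (S∖S') ∪ {s} and (w^s)_s = 1; and (c) for each s ∈ S∖S', supp(u^s) ⊆ S' ∪ {s} and (u^s)_s = 1. -/

import Mathlib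

/-!
Take `S'` maximal among the sets that avoid `i`, contain `supp u* \ {i}` and support no nonzero
vector of `W^⊥`, i.e. index linearly independent rows of `N`. Maximality, together with `u*` for
the coordinate `i`, makes `S'` a basis of the matroid of supports of `W^⊥`: each `s ∉ S'` carries
a nonzero vector of `W^⊥` supported on `S' ∪ {s}`, and an elementary vector below it, scaled at
`s`, is `u^s`. Independence of the rows on `S'` makes the restriction `W → ℝ^{S'}` onto, giving
`w ∈ W` equal to the unit vector `e_s` on `S'`; pairing with the vectors of `W^⊥` supported on
`S' ∪ {t}`, `t ∉ S'`, shows that no nonzero vector of `W` is supported off `S'`, so an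
elementary vector below `w`, scaled at `s`, is `w^s`.
-/

open Matrix Set

/-- A vector `v` is elementary in a linear subspace `V ⊆ ℝ^S` if `v ∈ V`, `v ≠ 0`, and no
nonzero `v' ∈ V` has support strictly contained in the support of `v`. -/
def IsElementary {S : Type*} (V : Submodule ℝ (S → ℝ)) (v : S → ℝ) : Prop :=
  v ∈ V ∧ v ≠ 0 ∧ ∀ v' ∈ V, v' ≠ 0 → ¬ Function.support v' ⊂ Function.support v

section SupportIndep

variable {K S : Type*} [Semiring K]

def SupportIndep (V : Submodule K (S → K)) (A : Set S) : Prop :=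
  ∀ v ∈ V, Function.support v ⊆ A → v = 0

/-- `A` is a basis of the matroid on `S` whose circuits are the minimal supports of nonzero
vectors of `V`. -/
structure IsSupportBasis (V : Submodule K (S → K)) (A : Set S) : Prop where
  supportIndep : SupportIndep V A
  exists_support_subset_insert : ∀ a ∉ A, ∃ v ∈ V, v ≠ 0 ∧ Function.support v ⊆ insert a A

variable {V W : Submodule K (S → K)} {A : Set S}

theorem SupportIndep.apply_ne_zero (hA : SupportIndep V A) {v : S → K} (hv : v ∈ V)
    (hv0 : v ≠ 0) {a : S} (hsub : Function.support v ⊆ insert a A) : v a ≠ 0 := by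
  intro ha
  refine hv0 (hA v hv fun t ht => ?_)
  rcases hsub ht with rfl | htA
  · exact absurd ha ht
  · exact htA

theorem exists_isSupportBasis [Finite S] {T : Set S} (hT : SupportIndep V T) {i : S}
    (hiT : i ∉ T) {v : S → K} (hv : v ∈ V) (hv0 : v ≠ 0)
    (hvT : Function.support v ⊆ insert i T) :
    ∃ B, T ⊆ B ∧ i ∉ B ∧ IsSupportBasis V B := by
  obtain ⟨B, hTB, hB⟩ :=
    Finite.exists_le_maximal (p := fun A : Set S => i ∉ A ∧ SupportIndep V A) ⟨hiT, hT⟩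
  refine ⟨B, hTB, hB.prop.1, hB.prop.2, fun a haB => ?_⟩
  by_cases hai : a = i
  · subst hai
    exact ⟨v, hv, hv0, hvT.trans (insert_subset_insert hTB)⟩
  by_contra! hnone
  have hindep : SupportIndep V (insert a B) := fun u hu hsub => by
    by_contra hu0
    exact hnone u hu hu0 hsub
  exact haB (hB.mem_of_prop_insert ⟨by simp [Ne.symm hai, hB.prop.1], hindep⟩)

/-- Pairing `w ∈ W` with a vector of `V` supported on `insert a A` isolates the coordinate
`w a` when `w` vanishes on `A`. -/
theorem IsSupportBasis.supportIndep_compl [NoZeroDivisors K] [Fintype S] (hA : IsSupportBasis V A)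
    (horth : ∀ u ∈ V, ∀ w ∈ W, u ⬝ᵥ w = 0) : SupportIndep W Aᶜ := by
  intro w hw hwA
  funext a
  by_cases haA : a ∈ A
  · exact Function.notMem_support.mp fun ha => hwA ha haA
  obtain ⟨u, hu, hu0, huA⟩ := hA.exists_support_subset_insert a haA
  have hsingle : u ⬝ᵥ w = u a * w a := by
    refine Finset.sum_eq_single a (fun t _ hta => ?_) (by simp)
    by_cases htA : t ∈ A
    · rw [Function.notMem_support.mp fun ht => hwA ht htA, mul_zero]
    · rw [Function.notMem_support.mp fun ht => (huA ht).elim hta htA, zero_mul]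
  have := horth u hu w hw
  rw [hsingle] at this
  exact (mul_eq_zero.mp this).resolve_left (hA.supportIndep.apply_ne_zero hu hu0 huA)

end SupportIndep

section Matrix

variable {K S R : Type*} [Fintype S]

theorem dotProduct_eq_zero_of_mem_ker_transpose_of_mem_range [CommSemiring K] [Fintype R]
    {N : Matrix S R K} {u w : S → K} (hu : u ∈ LinearMap.ker Nᵀ.mulVecLin)
    (hw : w ∈ LinearMap.range N.mulVecLin) : u ⬝ᵥ w = 0 := by
  obtain ⟨x, rfl⟩ := hw
  rw [LinearMap.mem_ker, mulVecLin_apply, mulVec_transpose] at hu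
  rw [mulVecLin_apply, dotProduct_mulVec, hu, zero_dotProduct]

theorem Matrix.mulVec_surjective_of_linearIndependent_row [Field K] {m n : Type*} [Fintype m]
    [Fintype n] {M : Matrix m n K} (h : LinearIndependent K M.row) :
    Function.Surjective M.mulVec := by
  have hrange : LinearMap.range M.mulVecLin = ⊤ := by
    apply Submodule.eq_top_of_finrank_eq
    rw [← Matrix.rank, h.rank_matrix, Module.finrank_fintype_fun_eq_card]
  exact LinearMap.range_eq_top.mp hrange

theorem SupportIndep.linearIndepOn_row [CommRing K] {N : Matrix S R K} {A : Set S}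
    (hA : SupportIndep (LinearMap.ker Nᵀ.mulVecLin) A) : LinearIndepOn K N.row A := by
  classical
  rw [linearIndepOn_iff'']
  intro t g htA hg hsum
  have hker : g ∈ LinearMap.ker Nᵀ.mulVecLin := by
    rw [LinearMap.mem_ker, mulVecLin_apply, mulVec_transpose, vecMul_eq_sum,
      ← Finset.sum_subset (Finset.subset_univ t) fun i _ hi => by simp [hg i hi]]
    exact hsum
  have hg0 := hA g hker fun i hi => htA (by by_contra h; exact hi (hg i h))
  simp [hg0]

theorem SupportIndep.exists_mem_range_eqOn [Field K] [Fintype R] {N : Matrix S R K} {A : Set S}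
    (hA : SupportIndep (LinearMap.ker Nᵀ.mulVecLin) A) (f : S → K) :
    ∃ w ∈ LinearMap.range N.mulVecLin, EqOn w f A := by
  classical
  obtain ⟨x, hx⟩ := Matrix.mulVec_surjective_of_linearIndependent_row
    (M := N.submatrix ((↑) : A → S) id) (hA.linearIndepOn_row) (f ∘ (↑))
  exact ⟨N *ᵥ x, ⟨x, rfl⟩, fun a ha => congrFun hx ⟨a, ha⟩⟩

end Matrix

section IsElementary

variable {S : Type*} {V : Submodule ℝ (S → ℝ)}

theorem IsElementary.smul {v : S → ℝ} (h : IsElementary V v) {c : ℝ} (hc : c ≠ 0) :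
    IsElementary V (c • v) := by
  obtain ⟨hv, hv0, hmin⟩ := h
  refine ⟨V.smul_mem c hv, smul_ne_zero hc hv0, ?_⟩
  rw [Function.support_const_smul_of_ne_zero c v hc]
  exact hmin

theorem IsElementary.supportIndep_support_diff {u : S → ℝ} (hu : IsElementary V u) {i : S}
    (hi : u i ≠ 0) : SupportIndep V (Function.support u \ {i}) := by
  intro v hv hsub
  by_contra hv0
  refine hu.2.2 v hv hv0 ⟨hsub.trans sdiff_subset, fun hsup => ?_⟩
  exact (hsub (hsup hi)).2 rfl

theorem exists_isElementary_support_subset [Finite S] {v : S → ℝ} (hv : v ∈ V) (hv0 : v ≠ 0) :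
    ∃ e, IsElementary V e ∧ Function.support e ⊆ Function.support v := by
  obtain ⟨e, ⟨he, he0, hev⟩, hmin⟩ := exists_minimalFor_of_wellFoundedLT
    (fun e => e ∈ V ∧ e ≠ 0 ∧ Function.support e ⊆ Function.support v) Function.support
    ⟨v, hv, hv0, subset_rfl⟩
  refine ⟨e, ⟨he, he0, fun e' he' he'0 hlt => ?_⟩, hev⟩
  exact hlt.2 (hmin ⟨he', he'0, hlt.1.trans hev⟩ hlt.1)

theorem SupportIndep.exists_isElementary [Finite S] {A : Set S} (hA : SupportIndep V A)
    {v : S → ℝ} (hv : v ∈ V) (hv0 : v ≠ 0) {a : S} (hvA : Function.support v ⊆ insert a A) :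
    ∃ e, IsElementary V e ∧ Function.support e ⊆ insert a A ∧ e a = 1 := by
  obtain ⟨e, he, hev⟩ := exists_isElementary_support_subset hv hv0
  have hea : e a ≠ 0 := hA.apply_ne_zero he.1 he.2.1 (hev.trans hvA)
  refine ⟨(e a)⁻¹ • e, he.smul (inv_ne_zero hea), ?_, inv_mul_cancel₀ hea⟩
  rw [Function.support_const_smul_of_ne_zero _ _ (inv_ne_zero hea)]
  exact hev.trans hvA

theorem IsSupportBasis.exists_isElementary_of_notMem [Finite S] {A : Set S}
    (hA : IsSupportBasis V A) {a : S} (ha : a ∉ A) :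
    ∃ e, IsElementary V e ∧ Function.support e ⊆ insert a A ∧ e a = 1 := by
  obtain ⟨v, hv, hv0, hvA⟩ := hA.exists_support_subset_insert a ha
  exact hA.supportIndep.exists_isElementary hv hv0 hvA

theorem IsSupportBasis.exists_isElementary_range_of_mem {R : Type*} [Fintype S] [Fintype R]
    {N : Matrix S R ℝ} {A : Set S} (hA : IsSupportBasis (LinearMap.ker Nᵀ.mulVecLin) A)
    {s : S} (hs : s ∈ A) :
    ∃ w, IsElementary (LinearMap.range N.mulVecLin) w ∧ Function.support w ⊆ insert s Aᶜ ∧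
      w s = 1 := by
  classical
  obtain ⟨w, hw, hwA⟩ := hA.supportIndep.exists_mem_range_eqOn (Pi.single s 1)
  have hws : w s = 1 := by simp [hwA hs]
  have hwsupp : Function.support w ⊆ insert s Aᶜ := by
    intro t ht
    by_cases htA : t ∈ A
    · rw [Function.mem_support, hwA htA, Pi.single_apply] at ht
      exact Or.inl (by_contra fun hts => ht (if_neg hts))
    · exact Or.inr htA
  have hcompl := hA.supportIndep_compl fun u hu w hw =>
    dotProduct_eq_zero_of_mem_ker_transpose_of_mem_range hu hw
  exact hcompl.exists_isElementary hw (fun h => by simp [h] at hws) hwsupp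

end IsElementary

/-- Lemma 3.7 (`lem:basic`): given an elementary vector `u*` of `W^⊥ = ker Nᵀ` with
`u*_i ≠ 0`, there exist a set `S' ⊆ S` with `i ∉ S'` and `supp(u*) ⊆ S' ∪ {i}`, elementary
vectors `w^s ∈ W = range N` for `s ∈ S'` with `supp(w^s) ⊆ (S∖S') ∪ {s}` and `w^s_s = 1`,
and elementary vectors `u^s ∈ W^⊥` for `s ∉ S'` with `supp(u^s) ⊆ S' ∪ {s}` and `u^s_s = 1`. -/
theorem elementary_basis_exchange
    {S R : Type*} [Fintype S] [Fintype R]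
    (N : Matrix S R ℝ) (i : S) (ustar : S → ℝ)
    (hustar : IsElementary (LinearMap.ker Nᵀ.mulVecLin) ustar)
    (hi : ustar i ≠ 0) :
    ∃ (S' : Set S) (w : S → (S → ℝ)) (u : S → (S → ℝ)),
      i ∉ S' ∧ Function.support ustar ⊆ S' ∪ {i} ∧
      (∀ s ∈ S', IsElementary (LinearMap.range N.mulVecLin) (w s) ∧
        Function.support (w s) ⊆ S'ᶜ ∪ {s} ∧ w s s = 1) ∧
      (∀ s ∉ S', IsElementary (LinearMap.ker Nᵀ.mulVecLin) (u s) ∧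
        Function.support (u s) ⊆ S' ∪ {s} ∧ u s s = 1) := by
  have hustar_supp := subset_insert_sdiff_singleton i (Function.support ustar)
  obtain ⟨S', hS', hiS', hB⟩ := exists_isSupportBasis (hustar.supportIndep_support_diff hi)
    (fun h => h.2 rfl) hustar.1 hustar.2.1 hustar_supp
  choose! w hw using fun s (hs : s ∈ S') => hB.exists_isElementary_range_of_mem hs
  choose! u hu using fun s (hs : s ∉ S') => hB.exists_isElementary_of_notMem hs
  simp only [union_singleton]
  exact ⟨S', w, u, hiS', hustar_supp.trans (insert_subset_insert hS'), hw, hu⟩
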